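/- arXiv:hep-th/0107033 — 5 statements merged into one kernel-verified Lean document; each statement's English description precedes it below -/
import Mathlib

section
/- For every natural number r, real numbers v_0, v_1, ..., v_r, and integers A, B with 0 ≤ B < A ≤ r, the sum ∑_{i=B}^{A} ( ∏_{α=0}^{i-1} (v_A − v_α) ) · ( ∏_{β=i+1}^{r} (v_B − v_β) ) equals 0. -/
/-! With `a = v A` and `b = v B`, put `F i = ∏_{α < i} (a - v α) · ∏_{i ≤ β ≤ r} (b - v β)`.
Since `(a - v i) - (b - v i) = a - b`, the `i`-th summand times `a - b` is `F (i + 1) - F i`,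
so `(a - b)` times the sum telescopes to `F (A + 1) - F B`. Both vanish: `F (A + 1)` contains the
factor `a - v A` and `F B` the factor `b - v B`. When `a = b` every summand already has one of
these two vanishing factors. -/

open Finset

section Telescoping

variable {R : Type*} [CommRing R] (v : ℕ → R) (a b : R)

theorem prod_range_succ_mul_prod_Icc_sub_prod_range_mul_prod_Icc {i r : ℕ} (hir : i ≤ r) :
    (∏ α ∈ range (i + 1), (a - v α)) * ∏ β ∈ Icc (i + 1) r, (b - v β) -
        (∏ α ∈ range i, (a - v α)) * ∏ β ∈ Icc i r, (b - v β) =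
      (a - b) * ((∏ α ∈ range i, (a - v α)) * ∏ β ∈ Icc (i + 1) r, (b - v β)) := by
  rw [prod_range_succ, Icc_eq_cons_Ioc hir, prod_cons, ← Icc_add_one_left_eq_Ioc]
  ring

theorem sub_mul_sum_Icc_prod_range_mul_prod_Icc {m n r : ℕ} (hmn : m ≤ n) (hnr : n ≤ r) :
    (a - b) * ∑ i ∈ Icc m n, (∏ α ∈ range i, (a - v α)) * ∏ β ∈ Icc (i + 1) r, (b - v β) =
      (∏ α ∈ range (n + 1), (a - v α)) * ∏ β ∈ Icc (n + 1) r, (b - v β) -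
        (∏ α ∈ range m, (a - v α)) * ∏ β ∈ Icc m r, (b - v β) := by
  rw [mul_sum, ← sum_Icc_sub hmn fun i =>
    (∏ α ∈ range i, (a - v α)) * ∏ β ∈ Icc i r, (b - v β)]
  exact sum_congr rfl fun i hi =>
    (prod_range_succ_mul_prod_Icc_sub_prod_range_mul_prod_Icc v a b
      ((mem_Icc.mp hi).2.trans hnr)).symm

end Telescoping

theorem prod_range_mul_prod_Icc_succ_eq_zero_of_eq {R : Type*} [CommRing R] (v : ℕ → R)
    {r A B i : ℕ} (hBA : B < A) (hAr : A ≤ r) (hv : v A = v B) (hi : B ≤ i) :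
    (∏ α ∈ range i, (v A - v α)) * ∏ β ∈ Icc (i + 1) r, (v B - v β) = 0 := by
  rcases hi.eq_or_lt with rfl | hBi
  · exact mul_eq_zero_of_right _ <|
      prod_eq_zero (mem_Icc.mpr ⟨hBA, hAr⟩) (by rw [hv, sub_self])
  · exact mul_eq_zero_of_left (prod_eq_zero (mem_range.mpr hBi) (by rw [hv, sub_self])) _

/-- For every natural number `r`, real numbers `v 0, …, v r`, and natural numbers
`A, B` with `0 ≤ B < A ≤ r`, the sum
`∑_{i=B}^{A} (∏_{α=0}^{i-1} (v A − v α)) · (∏_{β=i+1}^{r} (v B − v β))` equals `0`. -/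
theorem stmt0 (r : ℕ) (v : ℕ → ℝ) (A B : ℕ) (hBA : B < A) (hAr : A ≤ r) :
    ∑ i ∈ Finset.Icc B A,
      (∏ α ∈ Finset.range i, (v A - v α)) * (∏ β ∈ Finset.Icc (i + 1) r, (v B - v β)) = 0 := by
  by_cases hv : v A = v B
  · exact sum_eq_zero fun i hi =>
      prod_range_mul_prod_Icc_succ_eq_zero_of_eq v hBA hAr hv (mem_Icc.mp hi).1
  have hFA : ∏ α ∈ range (A + 1), (v A - v α) = 0 :=
    prod_eq_zero (self_mem_range_succ A) (sub_self _)
  have hFB : ∏ β ∈ Icc B r, (v B - v β) = 0 :=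
    prod_eq_zero (mem_Icc.mpr ⟨le_rfl, hBA.le.trans hAr⟩) (sub_self _)
  have hsum := sub_mul_sum_Icc_prod_range_mul_prod_Icc v (v A) (v B) hBA.le hAr
  rw [hFA, hFB, zero_mul, mul_zero, sub_zero] at hsum
  exact (mul_eq_zero.mp hsum).resolve_left (sub_ne_zero.mpr hv)
end

section
/- For every integer n ≥ 1 and real numbers v_0, v_1, ..., v_n, the quantity $_n := ∑_{k=0}^{n} ( ∏_{i=0}^{k-1} (v_n − v_i) ) · ( ∏_{j=k+1}^{n} (v_0 − v_j) ) equals 0. -/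
/-!
Multiplying the sum by `v n - v 0` makes it telescope: with
`e k = (∏_{i<k} (v n - v i)) · ∏_{k ≤ j ≤ n} (v 0 - v j)` the `k`-th term times `v n - v 0`
is `e (k + 1) - e k`, so `(v n - v 0) · $_n = e (n + 1) - e 0`, and both ends contain a zero
factor.
When `v n = v 0` every term already contains the zero factor `v n - v 0` or `v 0 - v n`.
-/

open Finset

theorem mul_prod_Icc_add_one_eq_prod_Icc {M : Type*} [CommMonoid M] (f : ℕ → M) {k n : ℕ}
    (hkn : k ≤ n) : f k * ∏ j ∈ Icc (k + 1) n, f j = ∏ j ∈ Icc k n, f j := by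
  rw [Icc_add_one_left_eq_Ioc, mul_prod_Ioc_eq_prod_Icc hkn]

theorem sub_mul_sum_prod_mul_prod {R : Type*} [CommRing R] (a b : R) (v : ℕ → R) (n : ℕ) :
    (a - b) * ∑ k ∈ range (n + 1),
      (∏ i ∈ range k, (a - v i)) * ∏ j ∈ Icc (k + 1) n, (b - v j) =
      ∏ i ∈ range (n + 1), (a - v i) - ∏ j ∈ range (n + 1), (b - v j) := by
  set e : ℕ → R := fun k => (∏ i ∈ range k, (a - v i)) * ∏ j ∈ Icc k n, (b - v j)
  have step : ∀ k ∈ range (n + 1),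
      (a - b) * ((∏ i ∈ range k, (a - v i)) * ∏ j ∈ Icc (k + 1) n, (b - v j)) =
        e (k + 1) - e k := by
    intro k hk
    simp only [e, prod_range_succ,
      ← mul_prod_Icc_add_one_eq_prod_Icc _ (Nat.lt_succ_iff.mp (mem_range.mp hk))]
    ring
  rw [mul_sum, sum_congr rfl step, sum_range_sub]
  simp [e, Nat.range_succ_eq_Icc_zero]

/-- For every `n ≥ 1` and real numbers `v 0, …, v n`, the quantity
`$_n = ∑_{k=0}^{n} (∏_{i=0}^{k-1} (v n − v i)) · (∏_{j=k+1}^{n} (v 0 − v j))` equals `0`. -/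
theorem stmt1 (n : ℕ) (hn : 1 ≤ n) (v : ℕ → ℝ) :
    ∑ k ∈ Finset.range (n + 1),
      (∏ i ∈ Finset.range k, (v n - v i)) * (∏ j ∈ Finset.Icc (k + 1) n, (v 0 - v j)) = 0 := by
  by_cases hv : v n = v 0
  · refine sum_eq_zero fun k _ => ?_
    rcases Nat.eq_zero_or_pos k with rfl | hk
    · exact mul_eq_zero_of_right _ (prod_eq_zero (i := n) (by simp [hn]) (by simp [hv]))
    · exact mul_eq_zero_of_left (prod_eq_zero (i := 0) (by simpa using hk) (by simp [hv])) _
  · have htele := sub_mul_sum_prod_mul_prod (v n) (v 0) v n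
    rw [prod_eq_zero (i := n) (by simp) (sub_self _),
      prod_eq_zero (i := 0) (by simp) (sub_self _), sub_zero] at htele
    exact (mul_eq_zero.mp htele).resolve_left (sub_ne_zero.mpr hv)
end

section
/- Let R be an associative unital algebra over ℝ, let p_1, ..., p_N ∈ R be pairwise orthogonal nonzero idempotents, let λ_1, ..., λ_N ∈ ℝ, and set φ = ∑_{i=1}^{N} λ_i p_i. Fix real numbers v_1, ..., v_m and a nonzero real number b. Then b · φ · (φ − v_1·1) · ... · (φ − v_m·1) = 0 if and only if for every i one has λ_i ∈ {0, v_1, ..., v_m}. That is, the solutions of the field equation among such linear combinations of orthogonal projections are exactly the GMS solitons whose coefficients are roots of b x(x − v_1)···(x − v_m). -/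
/-!
Multiplying `φ = ∑ λᵢ pᵢ` on the left by `pᵢ` picks out `λᵢ pᵢ`, so `pᵢ f(φ) = f(λᵢ) pᵢ` for
every polynomial `f`, and hence `φ f(φ) = ∑ λᵢ f(λᵢ) pᵢ`. Multiplying on the right by `pᵢ` shows
that nonzero orthogonal idempotents are linearly independent, so `φ f(φ) = 0` exactly when each
`λᵢ` is a root of `x f(x)`; here `f = (x - v₁)⋯(x - vₘ)`.
-/

open Polynomial

namespace OrthogonalIdempotents

variable {K R ι : Type*} [CommRing K] [Ring R] [Algebra K R] [Fintype ι] {e : ι → R}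

theorem mul_sum_smul (he : OrthogonalIdempotents e) (c : ι → K) (i : ι) :
    e i * ∑ j, c j • e j = c i • e i := by
  classical
  simp [Finset.mul_sum, he.mul_eq, Finset.sum_ite_eq]

theorem sum_smul_mul (he : OrthogonalIdempotents e) (c : ι → K) (i : ι) :
    (∑ j, c j • e j) * e i = c i • e i := by
  classical
  simp [Finset.sum_mul, he.mul_eq, Finset.sum_ite_eq']

theorem sum_smul_eq_zero_iff (he : OrthogonalIdempotents e) (c : ι → K) :
    ∑ i, c i • e i = 0 ↔ ∀ i, c i • e i = 0 := by
  refine ⟨fun h i => ?_, fun h => Finset.sum_eq_zero fun i _ => h i⟩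
  rw [← he.sum_smul_mul c i, h, zero_mul]

theorem mul_pow_sum_smul (he : OrthogonalIdempotents e) (c : ι → K) (i : ι) (n : ℕ) :
    e i * (∑ j, c j • e j) ^ n = c i ^ n • e i := by
  induction n with
  | zero => simp
  | succ n ih =>
    rw [pow_succ, ← mul_assoc, ih, smul_mul_assoc, he.mul_sum_smul, smul_smul, pow_succ]

theorem mul_aeval_sum_smul (he : OrthogonalIdempotents e) (c : ι → K) (i : ι) (f : K[X]) :
    e i * aeval (∑ j, c j • e j) f = f.eval (c i) • e i := by
  induction f using Polynomial.induction_on' with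
  | add f g hf hg => rw [map_add, mul_add, hf, hg, eval_add, add_smul]
  | monomial n a =>
    rw [aeval_monomial, Algebra.algebraMap_eq_smul_one, smul_mul_assoc, one_mul, mul_smul_comm,
      he.mul_pow_sum_smul, smul_smul, eval_monomial]

theorem sum_smul_mul_aeval (he : OrthogonalIdempotents e) (c : ι → K) (f : K[X]) :
    (∑ i, c i • e i) * aeval (∑ j, c j • e j) f = ∑ i, (c i * f.eval (c i)) • e i := by
  simp only [Finset.sum_mul, smul_mul_assoc, he.mul_aeval_sum_smul, smul_smul]

end OrthogonalIdempotents

theorem prod_ofFn_sub_algebraMap_eq_aeval {K R : Type*} [CommRing K] [Ring R] [Algebra K R]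
    {m : ℕ} (x : R) (v : Fin m → K) :
    (List.ofFn fun j => x - algebraMap K R (v j)).prod = aeval x (∏ j, (X - C (v j))) := by
  rw [← List.prod_ofFn, map_list_prod, List.map_ofFn]
  congr 2
  ext j
  simp

/-- Let `p 1, …, p N` be pairwise orthogonal nonzero idempotents in an associative unital
ℝ-algebra, `φ = ∑ i, λ i • p i`, `v 1, …, v m` reals and `b ≠ 0`. Then
`b • (φ·(φ − v 1·1)·⋯·(φ − v m·1)) = 0` iff every coefficient `λ i` lies in
`{0, v 1, …, v m}`. -/
theorem stmt7 (R : Type*) [Ring R] [Algebra ℝ R] (N : ℕ) (p : Fin N → R)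
    (horth : ∀ i j, i ≠ j → p i * p j = 0)
    (hidem : ∀ i, p i * p i = p i)
    (hne : ∀ i, p i ≠ 0)
    (lam : Fin N → ℝ) (φ : R) (hφ : φ = ∑ i, lam i • p i)
    (m : ℕ) (v : Fin m → ℝ) (b : ℝ) (hb : b ≠ 0) :
    b • (φ * (List.ofFn (fun j : Fin m => φ - algebraMap ℝ R (v j))).prod) = 0 ↔
      ∀ i, lam i = 0 ∨ ∃ j, lam i = v j := by
  have he : OrthogonalIdempotents p := ⟨hidem, horth⟩
  subst hφ
  rw [prod_ofFn_sub_algebraMap_eq_aeval, he.sum_smul_mul_aeval, smul_eq_zero, or_iff_right hb,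
    he.sum_smul_eq_zero_iff]
  simp [smul_eq_zero, hne, eval_prod, Finset.prod_eq_zero_iff, sub_eq_zero]
end

section
/- Let R be an associative unital algebra over ℝ, let q_0, q_1, ..., q_m ∈ R be pairwise orthogonal idempotents with q_0 + q_1 + ... + q_m = 1, let v_0, v_1, ..., v_m be arbitrary real numbers, and set φ = ∑_{A=0}^{m} v_A q_A. Then for every element ψ ∈ R, ∑_{k=0}^{m} ( ∏_{i=0}^{k-1} (φ − v_i·1) ) · ψ · ( ∏_{j=k+1}^{m} (φ − v_j·1) ) = ∑_{A=0}^{m} ζ_A · q_A ψ q_A, where ζ_A = ∏_{i ≠ A} (v_A − v_i). In other words, all cross terms q_A ψ q_B with A ≠ B cancel, and the linearization (Hessian) of the field equation at the GMS soliton φ is block-diagonal with eigenvalue ζ_A on the block q_A ψ q_A. -/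
/-!
Each factor `φ - v i` multiplies `q A * ψ * q B` by `v A - v i` from the left and by
`v B - v i` from the right, so the `k`-th summand sends `q A * ψ * q B` to a scalar multiple of
itself, and the sum over `k` of these scalars is the divided difference of
`p = ∏ i, (X - v i)` at `(v A, v B)`. For `A ≠ B` it vanishes: if `v A ≠ v B` because
`(v A - v B)` times it is `p (v A) - p (v B) = 0`, and if `v A = v B` because every summand
contains a factor `v A - v C` with `C ∈ {A, B}`. On the diagonal only the `k = A` summand
survives, giving `ζ_A`.
-/

open Finset

section DividedDifference

variable {S : Type*} [CommRing S]

/-- Written without division, this is the divided difference `(p x - p y) / (x - y)` of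
`p = ∏ i < n, (X - v i)`. -/
def divDiffProd (v : ℕ → S) (n : ℕ) (x y : S) : S :=
  ∑ k ∈ range n, (∏ i ∈ range k, (x - v i)) * ∏ j ∈ Ico (k + 1) n, (y - v j)

theorem sub_mul_divDiffProd (v : ℕ → S) (n : ℕ) (x y : S) :
    (x - y) * divDiffProd v n x y = ∏ i ∈ range n, (x - v i) - ∏ i ∈ range n, (y - v i) := by
  have h := prod_add_ordered (range n) (fun i => y - v i) (fun _ => x - y)
  have hlt : ∀ k ∈ range n, (range n).filter (· < k) = range k := fun k hk => by
    ext i; simp only [mem_filter, mem_range] at hk ⊢; omega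
  have hgt : ∀ k ∈ range n, (range n).filter (k < ·) = Ico (k + 1) n := fun k _ => by
    ext i; simp only [mem_filter, mem_range, mem_Ico]; omega
  simp only [sub_add_sub_cancel'] at h
  rw [h, add_sub_cancel_left, divDiffProd, mul_sum]
  refine sum_congr rfl fun k hk => ?_
  rw [hlt k hk, hgt k hk, mul_assoc]

theorem divDiffProd_self {v : ℕ → S} {n A : ℕ} (hA : A < n) :
    divDiffProd v n (v A) (v A) = ∏ i ∈ (range n).erase A, (v A - v i) := by
  rw [divDiffProd, sum_eq_single_of_mem A (mem_range.2 hA)]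
  · have hsplit : (range n).erase A = range A ∪ Ico (A + 1) n := by
      ext i; simp only [mem_erase, mem_range, mem_union, mem_Ico]; omega
    rw [hsplit, prod_union]
    exact disjoint_left.2 fun i hi hi' => by simp only [mem_range, mem_Ico] at hi hi'; omega
  · intro k hk hkA
    rcases lt_or_gt_of_ne hkA with hlt | hgt
    · refine mul_eq_zero_of_right _ (prod_eq_zero (i := A) ?_ (sub_self _))
      simp only [mem_Ico, mem_range] at hk ⊢; omega
    · exact mul_eq_zero_of_left (prod_eq_zero (mem_range.2 hgt) (sub_self _)) _

theorem divDiffProd_eq_zero_of_ne [IsDomain S] {v : ℕ → S} {n A B : ℕ} (hA : A < n)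
    (hB : B < n) (hAB : A ≠ B) : divDiffProd v n (v A) (v B) = 0 := by
  by_cases hv : v A = v B
  · refine sum_eq_zero fun k hk => ?_
    obtain ⟨C, hC, hCk⟩ : ∃ C, (C = A ∨ C = B) ∧ C ≠ k := by
      by_cases hkA : A = k
      · exact ⟨B, Or.inr rfl, fun h => hAB (hkA.trans h.symm)⟩
      · exact ⟨A, Or.inl rfl, hkA⟩
    have hvC : v C = v A := by rcases hC with rfl | rfl <;> simp [hv]
    rcases lt_or_gt_of_ne hCk with hlt | hgt
    · exact mul_eq_zero_of_left (prod_eq_zero (mem_range.2 hlt) (by rw [hvC, sub_self])) _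
    · refine mul_eq_zero_of_right _ (prod_eq_zero (i := C) ?_ (by rw [hvC, hv, sub_self]))
      simp only [mem_Ico, mem_range] at hk ⊢
      rcases hC with rfl | rfl <;> omega
  · have hpA : ∏ i ∈ range n, (v A - v i) = 0 := prod_eq_zero (mem_range.2 hA) (sub_self _)
    have hpB : ∏ i ∈ range n, (v B - v i) = 0 := prod_eq_zero (mem_range.2 hB) (sub_self _)
    have h := sub_mul_divDiffProd v n (v A) (v B)
    rw [hpA, hpB, sub_zero] at h
    exact (mul_eq_zero.1 h).resolve_left (sub_ne_zero.2 hv)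

end DividedDifference

section Eigen

variable {𝕜 R : Type*} [CommRing 𝕜] [Ring R] [Algebra 𝕜 R] {φ y : R} (v : ℕ → 𝕜)

theorem list_prod_map_sub_algebraMap_mul {a : 𝕜} (hy : φ * y = a • y) (l : List ℕ) :
    (l.map fun i => φ - algebraMap 𝕜 R (v i)).prod * y = (l.map fun i => a - v i).prod • y := by
  induction l with
  | nil => simp
  | cons i l ih =>
    rw [List.map_cons, List.prod_cons, mul_assoc, ih, mul_smul_comm, sub_mul, hy,
      Algebra.algebraMap_eq_smul_one, smul_one_mul, ← sub_smul, smul_smul, List.map_cons,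
      List.prod_cons, mul_comm]

theorem mul_list_prod_map_sub_algebraMap {b : 𝕜} (hy : y * φ = b • y) (l : List ℕ) :
    y * (l.map fun i => φ - algebraMap 𝕜 R (v i)).prod = (l.map fun i => b - v i).prod • y := by
  induction l with
  | nil => simp
  | cons i l ih =>
    rw [List.map_cons, List.prod_cons, ← mul_assoc, mul_sub, hy,
      Algebra.algebraMap_eq_smul_one, mul_smul_one, ← sub_smul, smul_mul_assoc, ih, smul_smul,
      List.map_cons, List.prod_cons]

theorem sum_prod_mul_mul_prod_eq_divDiffProd_smul {a b : 𝕜} (hl : φ * y = a • y)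
    (hr : y * φ = b • y) (m : ℕ) :
    ∑ k ∈ range (m + 1),
        ((List.range k).map fun i => φ - algebraMap 𝕜 R (v i)).prod * y *
          ((List.range' (k + 1) (m - k)).map fun j => φ - algebraMap 𝕜 R (v j)).prod
      = divDiffProd v (m + 1) a b • y := by
  rw [divDiffProd, sum_smul]
  refine sum_congr rfl fun k _ => ?_
  rw [mul_assoc, mul_list_prod_map_sub_algebraMap v hr, mul_smul_comm,
    list_prod_map_sub_algebraMap_mul v hl, smul_smul, mul_comm, Nat.Ico_eq_range',
    Nat.add_sub_add_right]
  rfl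

theorem sum_smul_mul_of_orthogonal {ι : Type*} {s : Finset ι} {q : ι → R} {w : ι → 𝕜}
    (horth : ∀ A ∈ s, ∀ B ∈ s, A ≠ B → q A * q B = 0) (hidem : ∀ A ∈ s, q A * q A = q A)
    {A : ι} (hA : A ∈ s) : (∑ B ∈ s, w B • q B) * q A = w A • q A := by
  rw [sum_mul, sum_eq_single_of_mem A hA, smul_mul_assoc, hidem A hA]
  intro B hB hBA
  rw [smul_mul_assoc, horth B hB A hA hBA, smul_zero]

theorem mul_sum_smul_of_orthogonal {ι : Type*} {s : Finset ι} {q : ι → R} {w : ι → 𝕜}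
    (horth : ∀ A ∈ s, ∀ B ∈ s, A ≠ B → q A * q B = 0) (hidem : ∀ A ∈ s, q A * q A = q A)
    {A : ι} (hA : A ∈ s) : q A * ∑ B ∈ s, w B • q B = w A • q A := by
  rw [mul_sum, sum_eq_single_of_mem A hA, mul_smul_comm, hidem A hA]
  intro B hB hBA
  rw [mul_smul_comm, horth A hA B hB hBA.symm, smul_zero]

end Eigen

/-- Let `q 0, …, q m` be pairwise orthogonal idempotents summing to `1` in an associative
unital ℝ-algebra, `v 0, …, v m` arbitrary reals, and `φ = ∑ A, v A • q A`. Then for every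
`ψ`, `∑_{k=0}^{m} (∏_{i<k} (φ − v i·1)) · ψ · (∏_{j>k} (φ − v j·1))
= ∑_{A=0}^{m} ζ_A • (q A ψ q A)` where `ζ_A = ∏_{i ≠ A} (v A − v i)`; all cross terms
`q A ψ q B` with `A ≠ B` cancel. -/
theorem stmt8 (R : Type*) [Ring R] [Algebra ℝ R] (m : ℕ) (q : ℕ → R) (v : ℕ → ℝ)
    (horth : ∀ A ≤ m, ∀ B ≤ m, A ≠ B → q A * q B = 0)
    (hidem : ∀ A ≤ m, q A * q A = q A)
    (hsum : ∑ A ∈ Finset.range (m + 1), q A = 1)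
    (φ : R) (hφ : φ = ∑ A ∈ Finset.range (m + 1), v A • q A)
    (ψ : R) :
    ∑ k ∈ Finset.range (m + 1),
        ((List.range k).map (fun i => φ - algebraMap ℝ R (v i))).prod * ψ *
          ((List.range' (k + 1) (m - k)).map (fun j => φ - algebraMap ℝ R (v j))).prod
      = ∑ A ∈ Finset.range (m + 1),
          (∏ i ∈ (Finset.range (m + 1)).erase A, (v A - v i)) • (q A * ψ * q A) := by
  have horth' : ∀ A ∈ range (m + 1), ∀ B ∈ range (m + 1), A ≠ B → q A * q B = 0 :=
    fun A hA B hB => horth A (mem_range_succ_iff.1 hA) B (mem_range_succ_iff.1 hB)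
  have hidem' : ∀ A ∈ range (m + 1), q A * q A = q A :=
    fun A hA => hidem A (mem_range_succ_iff.1 hA)
  have hleft : ∀ A ∈ range (m + 1), ∀ B, φ * (q A * ψ * q B) = v A • (q A * ψ * q B) :=
    fun A hA B => by
      rw [← mul_assoc, ← mul_assoc, hφ, sum_smul_mul_of_orthogonal horth' hidem' hA,
        smul_mul_assoc, smul_mul_assoc]
  have hright : ∀ A, ∀ B ∈ range (m + 1), q A * ψ * q B * φ = v B • (q A * ψ * q B) :=
    fun A B hB => by
      rw [mul_assoc, hφ, mul_sum_smul_of_orthogonal horth' hidem' hB, mul_smul_comm]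
  have hψ : ψ = ∑ A ∈ range (m + 1), ∑ B ∈ range (m + 1), q A * ψ * q B := by
    conv_lhs => rw [← one_mul ψ, ← mul_one (1 * ψ), ← hsum]
    simp only [sum_mul, mul_sum]
    exact sum_comm
  conv_lhs => rw [hψ]
  simp only [mul_sum, sum_mul]
  rw [sum_comm]
  refine sum_congr rfl fun A hA => ?_
  rw [sum_comm, sum_eq_single_of_mem A hA,
    sum_prod_mul_mul_prod_eq_divDiffProd_smul v (hleft A hA A) (hright A A hA),
    divDiffProd_self (mem_range.1 hA)]
  intro B hB hBA
  rw [sum_prod_mul_mul_prod_eq_divDiffProd_smul v (hleft A hA B) (hright A B hB),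
    divDiffProd_eq_zero_of_ne (mem_range.1 hA) (mem_range.1 hB) hBA.symm, zero_smul]
end

section
/- Let V be a real polynomial of degree m ≥ 2 with leading coefficient b_m ≠ 0, and assume that every real root y of the derivative V' is a simple root, i.e. V''(y) ≠ 0 whenever V'(y) = 0. Then the set of real critical points of V is finite and ∑_{y : V'(y)=0} sgn(V''(y)) = sgn(b_m) if m is even, and = 0 if m is odd. -/
/-!
Let `P = V'`. Factoring `P = (X - r) Q` at a simple root `r` gives `Q r = P' r`, so `P` changes
sign at `r`, from `-sgn P'(r)` to `sgn P'(r)`, while between consecutive roots its sign is constant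
by the intermediate value theorem. Thus `2 sgn P'(r)` is the jump of `sgn P` at `r`, and the sum
telescopes to the difference of the signs of `P` at `+∞` and `-∞`, which are `sgn b_m` and
`(-1)^(m-1) sgn b_m` because the leading coefficient of `V'` is `m b_m`.
-/

open Polynomial Set Topology

theorem ContinuousOn.sign_eq_of_forall_ne_zero {α : Type*} [ConditionallyCompleteLinearOrder α]
    [TopologicalSpace α] [OrderTopology α] [DenselyOrdered α] {f : α → ℝ} {a b : α}
    (hf : ContinuousOn f (uIcc a b)) (h0 : ∀ t ∈ uIcc a b, f t ≠ 0) :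
    SignType.sign (f a) = SignType.sign (f b) := by
  by_contra hne
  have hmem : (0 : ℝ) ∈ uIcc (f a) (f b) := by
    rcases (h0 a left_mem_uIcc).lt_or_gt with ha | ha <;>
      rcases (h0 b right_mem_uIcc).lt_or_gt with hb | hb <;>
      simp_all [mem_uIcc, sign_pos, sign_neg, le_of_lt]
  obtain ⟨t, ht, hft⟩ := intermediate_value_uIcc hf hmem
  exact h0 t ht hft

theorem Real.sign_eq_coe_sign (r : ℝ) : Real.sign r = SignType.sign r := by
  rcases lt_trichotomy r 0 with h | rfl | h
  · simp [Real.sign_of_neg h, _root_.sign_neg h]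
  · simp
  · simp [Real.sign_of_pos h, sign_pos h]

namespace Polynomial

variable {P : ℝ[X]}

theorem sign_eval_eq_sign_mul_sign_derivative {r x : ℝ} (hr : P.IsRoot r)
    (hP' : P.derivative.eval r ≠ 0) (hroots : ∀ t ∈ uIcc x r, P.IsRoot t → t = r) :
    SignType.sign (P.eval x) = SignType.sign (x - r) * SignType.sign (P.derivative.eval r) := by
  set Q := P /ₘ (X - C r)
  have hPQ : (X - C r) * Q = P := mul_divByMonic_eq_iff_isRoot.2 hr
  have hQr : Q.eval r = P.derivative.eval r := by
    rw [← hPQ]; simp [derivative_mul]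
  have hQ : ∀ t ∈ uIcc x r, Q.eval t ≠ 0 := by
    intro t ht hQt
    by_cases htr : t = r
    · subst htr
      exact hP' (hQr ▸ hQt)
    · exact htr (hroots t ht (by rw [IsRoot, ← hPQ, eval_mul, hQt, mul_zero]))
  calc SignType.sign (P.eval x) = SignType.sign (x - r) * SignType.sign (Q.eval x) := by
        rw [← hPQ, eval_mul, sign_mul]; simp
    _ = _ := by rw [Q.continuous.continuousOn.sign_eq_of_forall_ne_zero hQ, hQr]

theorem sign_eval_of_roots_lt {x : ℝ} (hroots : ∀ y, P.IsRoot y → y < x) :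
    SignType.sign (P.eval x) = SignType.sign P.leadingCoeff := by
  have hP : P ≠ 0 := fun h => (hroots x (by simp [h])).false
  rcases (leadingCoeff_ne_zero.2 hP).lt_or_gt with hlc | hlc
  · rw [sign_neg hlc, sign_neg (eval_lt_zero_of_roots_lt_of_leadingCoeff_nonpos hroots hlc.le)]
  · rw [sign_pos hlc, sign_pos (zero_lt_eval_of_roots_lt_of_leadingCoeff_nonneg hroots hlc.le)]

theorem sign_eval_of_lt_roots {x : ℝ} (hroots : ∀ y, P.IsRoot y → x < y) :
    SignType.sign (P.eval x) = (-1) ^ P.natDegree * SignType.sign P.leadingCoeff := by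
  have hP : P ≠ 0 := fun h => (hroots x (by simp [h])).false
  have h : SignType.sign ((-1) ^ P.natDegree * P.eval x) = SignType.sign P.leadingCoeff := by
    rcases (leadingCoeff_ne_zero.2 hP).lt_or_gt with hlc | hlc
    · have := negOnePow_mul_eval_lt_zero_of_lt_roots_of_leadingCoeff_nonpos hroots hlc.le
      rw [Int.cast_negOnePow_natCast] at this
      rw [sign_neg hlc, sign_neg this]
    · have := zero_lt_negOnePow_mul_eval_of_lt_roots_of_leadingCoeff_nonneg hroots hlc.le
      rw [Int.cast_negOnePow_natCast] at this
      rw [sign_pos hlc, sign_pos this]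
  rw [sign_mul, sign_pow, sign_neg neg_one_lt_zero] at h
  rw [← h, ← mul_assoc, ← mul_pow, neg_one_mul, neg_neg, one_pow, one_mul]

theorem two_mul_sum_sign_derivative_roots_lt
    (hsimple : ∀ y, P.IsRoot y → P.derivative.eval y ≠ 0) {s : Finset ℝ} {b : ℝ}
    (hs : ∀ y, y ∈ s ↔ P.IsRoot y ∧ y < b) (hb : ¬P.IsRoot b) :
    2 * ∑ y ∈ s, (SignType.sign (P.derivative.eval y) : ℝ) =
      SignType.sign (P.eval b) - (-1) ^ P.natDegree * SignType.sign P.leadingCoeff := by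
  induction s using Finset.induction_on_max generalizing b with
  | empty =>
    have hroots : ∀ y, P.IsRoot y → b < y := by
      intro y hy
      by_contra! hyb
      rcases hyb.lt_or_eq with hyb | rfl
      · exact Finset.notMem_empty y ((hs y).2 ⟨hy, hyb⟩)
      · exact hb hy
    rw [sign_eval_of_lt_roots hroots]
    push_cast [SignType.coe_one]
    ring
  | insert r t ht ih =>
    have hr : P.IsRoot r ∧ r < b := (hs r).1 (Finset.mem_insert_self r t)
    obtain ⟨c, htc, hcr⟩ : ∃ c, (∀ x ∈ t, x < c) ∧ c < r := by
      have hgt : ∀ᶠ c in 𝓝[<] r, ∀ x ∈ t, x < c := (Filter.eventually_all_finset t).2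
        fun x hx => (eventually_gt_nhds (ht x hx)).filter_mono nhdsWithin_le_nhds
      exact (hgt.and self_mem_nhdsWithin).exists
    have hbelow : ∀ y, P.IsRoot y → y ≤ b → y = r ∨ y < c := fun y hy hyb =>
      (Finset.mem_insert.1 ((hs y).2 ⟨hy, hyb.lt_of_ne fun h => hb (h ▸ hy)⟩)).imp_right (htc y)
    have hright : ∀ y ∈ uIcc b r, P.IsRoot y → y = r := by
      intro y hy hroot
      rw [uIcc_of_ge hr.2.le] at hy
      exact (hbelow y hroot hy.2).resolve_right (by linarith [hy.1])
    have hleft : ∀ y ∈ uIcc c r, P.IsRoot y → y = r := by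
      intro y hy hroot
      rw [uIcc_of_le hcr.le] at hy
      exact (hbelow y hroot (by linarith [hy.2, hr.2])).resolve_right (by linarith [hy.1])
    have ht' : ∀ y, y ∈ t ↔ P.IsRoot y ∧ y < c := by
      refine fun y => ⟨fun hy => ⟨((hs y).1 (Finset.mem_insert_of_mem hy)).1, htc y hy⟩, ?_⟩
      rintro ⟨hroot, hyc⟩
      refine (Finset.mem_insert.1 ((hs y).2 ⟨hroot, by linarith [hr.2]⟩)).resolve_left ?_
      rintro rfl
      linarith
    have hc : ¬P.IsRoot c := fun hroot => hcr.ne (hleft c left_mem_uIcc hroot)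
    have hsign_b : SignType.sign (P.eval b) = SignType.sign (P.derivative.eval r) := by
      rw [sign_eval_eq_sign_mul_sign_derivative hr.1 (hsimple r hr.1) hright,
        sign_pos (sub_pos.2 hr.2), one_mul]
    have hsign_c : SignType.sign (P.eval c) = -SignType.sign (P.derivative.eval r) := by
      rw [sign_eval_eq_sign_mul_sign_derivative hr.1 (hsimple r hr.1) hleft,
        sign_neg (sub_neg.2 hcr), neg_one_mul]
    rw [Finset.sum_insert fun hrt => (ht r hrt).false, mul_add, ih ht' hc, hsign_b, hsign_c]
    push_cast
    ring

theorem two_mul_sum_sign_derivative_roots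
    (hsimple : ∀ y, P.IsRoot y → P.derivative.eval y ≠ 0) {s : Finset ℝ}
    (hs : ∀ y, y ∈ s ↔ P.IsRoot y) :
    2 * ∑ y ∈ s, (SignType.sign (P.derivative.eval y) : ℝ) =
      (1 - (-1) ^ P.natDegree) * SignType.sign P.leadingCoeff := by
  obtain ⟨M, hM⟩ := s.exists_le
  have hroots : ∀ y, P.IsRoot y → y < M + 1 := fun y hy =>
    (hM y ((hs y).2 hy)).trans_lt (lt_add_one M)
  have hs' : ∀ y, y ∈ s ↔ P.IsRoot y ∧ y < M + 1 := fun y =>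
    ⟨fun hy => ⟨(hs y).1 hy, hroots y ((hs y).1 hy)⟩, fun hy => (hs y).2 hy.1⟩
  rw [two_mul_sum_sign_derivative_roots_lt hsimple hs' fun h => (hroots _ h).false,
    sign_eval_of_roots_lt hroots]
  ring

end Polynomial

theorem stmt9_general (V : Polynomial ℝ) (m : ℕ) (hm : 2 ≤ m) (hdeg : V.natDegree = m)
    (hsimple : ∀ y : ℝ, (Polynomial.derivative V).eval y = 0 →
      (Polynomial.derivative (Polynomial.derivative V)).eval y ≠ 0) :
    {y : ℝ | (Polynomial.derivative V).eval y = 0}.Finite ∧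
    ∀ hfin : {y : ℝ | (Polynomial.derivative V).eval y = 0}.Finite,
      ∑ y ∈ hfin.toFinset,
          Real.sign ((Polynomial.derivative (Polynomial.derivative V)).eval y)
        = if Even m then Real.sign V.leadingCoeff else 0 := by
  have hP : derivative V ≠ 0 := by
    rw [Ne, derivative_eq_zero]
    omega
  have hsign_lc : SignType.sign (derivative V).leadingCoeff = SignType.sign V.leadingCoeff := by
    rw [leadingCoeff_derivative, sign_mul, hdeg, sign_pos (by positivity : (0 : ℝ) < m), mul_one]
  refine ⟨finite_setOfPred_isRoot hP, fun hfin => ?_⟩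
  have key := two_mul_sum_sign_derivative_roots hsimple (s := hfin.toFinset)
    fun y => hfin.mem_toFinset
  rw [natDegree_derivative, hdeg, hsign_lc] at key
  simp only [Real.sign_eq_coe_sign]
  rcases Nat.even_or_odd m with he | ho
  · rw [(Nat.Even.sub_odd (by omega) he odd_one).neg_one_pow] at key
    rw [if_pos he]
    linarith
  · rw [(Nat.Odd.sub_odd ho odd_one).neg_one_pow] at key
    rw [if_neg (Nat.not_even_iff_odd.2 ho)]
    linarith

/-- Let `V` be a real polynomial of degree `m ≥ 2` with leading coefficient `b_m ≠ 0`
(i.e. `V ≠ 0` and `natDegree V = m`), such that every real root of `V'` is simple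
(`V''(y) ≠ 0` whenever `V'(y) = 0`). Then the set of real critical points of `V` is finite
and `∑_{y : V'(y)=0} sgn(V''(y))` equals `sgn(b_m)` if `m` is even and `0` if `m` is odd. -/
theorem stmt9 (V : Polynomial ℝ) (m : ℕ) (hm : 2 ≤ m) (hdeg : V.natDegree = m)
    (hV : V ≠ 0)
    (hsimple : ∀ y : ℝ, (Polynomial.derivative V).eval y = 0 →
      (Polynomial.derivative (Polynomial.derivative V)).eval y ≠ 0) :
    {y : ℝ | (Polynomial.derivative V).eval y = 0}.Finite ∧
    ∀ hfin : {y : ℝ | (Polynomial.derivative V).eval y = 0}.Finite,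
      ∑ y ∈ hfin.toFinset,
          Real.sign ((Polynomial.derivative (Polynomial.derivative V)).eval y)
        = if Even m then Real.sign V.leadingCoeff else 0 :=
  stmt9_general V m hm hdeg hsimple
end
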